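/- Let S̃ be the matrix obtained from S by removing its first row and first column. There exists a sequence v = (v_i)_{i≥1} with 0 < v_i ≤ 1 for all i ≥ 1 and v_i = Σ_{j≥1} S̃_{i,j} v_j for all i ≥ 1 (i.e. S̃v = v) if and only if Π_{i=1}^{∞} p_i > 0. (Equivalently, the irreducible aperiodic Markov chain with transition matrix S is transient if and only if Π_{i=1}^{∞} p_i > 0.) -/

import Mathlib

/-!
Write `N + 1 = A + F t`, where `A` keeps the Zeckendorf digits of `N` above its final block
`00(10)^s` or `00(10)^s1` (`t = 2s` or `2s + 1`). From `N` the machine moves to `N + 1` and to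
`A + F t - F j` with `j ≤ t`. If `A ≠ 0`, all these states have the same leading Zeckendorf
index `K(N)` as `N`; if `A = 0`, they are `F t`, `0` and states with leading index `t - 1`.
Hence `w N = 1 / π (K N)` is fixed by `S̃`, where `π (2s) = (p 2 ⋯ p (s+1))²` and
`π (2s+1) = π (2s) p (s+2)`: the row weights telescope to `p 1`, and in the case `A = 0` the
extra factor `p (s+2)` in the probability of moving up is compensated by `π t = π (t-1) p (s+2)`.
Conversely, since `S (N, N+1) > 0` and all other moves go down, a fixed vector is determined by
`v 1`, so `v = v 1 • w`, and `v ≤ 1` forces `inf π > 0`. Finally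
`π (2s) p 1² = (p 1 ⋯ p (s+1))²`, so `inf π > 0` iff `∏ p i > 0`.
-/

/-- Fibonacci sequence with `F 0 = 1`, `F 1 = 2`, `F (n+2) = F (n+1) + F n`. -/
def fibF : ℕ → ℕ
  | 0 => 1
  | 1 => 2
  | (n+2) => fibF (n+1) + fibF n

lemma fibF_pos : ∀ n, 0 < fibF n
  | 0 => by simp [fibF]
  | 1 => by simp [fibF]
  | (n+2) => by
      have h1 := fibF_pos (n+1)
      simp only [fibF]
      omega

/-- Zeckendorf digits of `N` in the base `fibF`: `N = ∑ i, zeck N i * fibF i`,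
with `zeck N i ∈ {0,1}` and no two consecutive `1`'s. -/
def zeck (N i : ℕ) : ℕ :=
  if h : N = 0 then 0
  else if i = Nat.findGreatest (fun j => fibF j ≤ N) N then 1
  else zeck (N - fibF (Nat.findGreatest (fun j => fibF j ≤ N) N)) i
termination_by N
decreasing_by
  exact Nat.sub_lt (Nat.pos_of_ne_zero h) (fibF_pos _)

lemma zeck_eq_zero_of_lt : ∀ N, ∀ i, N < i → zeck N i = 0 := by
  intro N
  induction N using Nat.strong_induction_on with
  | _ N ih =>
    intro i hi
    rw [zeck]
    split
    · rfl
    · rename_i h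
      have hkN : Nat.findGreatest (fun j => fibF j ≤ N) N ≤ N := Nat.findGreatest_le N
      rw [if_neg (by omega)]
      exact ih _ (Nat.sub_lt (Nat.pos_of_ne_zero h) (fibF_pos _)) i
        (lt_of_le_of_lt (Nat.sub_le _ _) hi)

lemma exists_break0 (N : ℕ) : ∃ i, ¬(zeck N (2*i+1) = 1 ∧ zeck N (2*i) = 0) := by
  refine ⟨N + 1, ?_⟩
  have h : zeck N (2*(N+1)+1) = 0 := zeck_eq_zero_of_lt N _ (by omega)
  simp [h]

lemma exists_break1 (N : ℕ) : ∃ i, ¬(zeck N (2*i+2) = 1 ∧ zeck N (2*i+1) = 0) := by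
  refine ⟨N + 1, ?_⟩
  have h : zeck N (2*(N+1)+2) = 0 := zeck_eq_zero_of_lt N _ (by omega)
  simp [h]

/-- The number `s` of `10`-blocks carried in the stochastic Fibonacci adding machine:
if the digits of `N` end with `00(10)^s` (case `ε₀ = 0`) or with `00(10)^s1`
(case `ε₀ = 1`), this returns `s`. -/
def carryLen (N : ℕ) : ℕ :=
  if zeck N 0 = 0 then Nat.find (exists_break0 N) else Nat.find (exists_break1 N)

/-- `Pprod p t = p 1 * p 2 * ⋯ * p t`. -/
def Pprod (p : ℕ → ℝ) (t : ℕ) : ℝ := ∏ i ∈ Finset.Icc 1 t, p i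

/-- The transition matrix `S` of the Fibonacci stochastic adding machine associated to
the probability sequence `p`:  `S N N = 1 - p 1`;  if the digits of `N` end with
`00(10)^s` then `S N (N+1) = p 1 ⋯ p (s+1)` and `S N (N+1-F (2m)) = p 1 ⋯ p m * (1 - p (m+1))`
for `1 ≤ m ≤ s`;  if the digits of `N` end with `00(10)^s1` then
`S N (N+1) = p 1 ⋯ p (s+2)` and `S N (N+1-F (2m-1)) = p 1 ⋯ p m * (1 - p (m+1))` for
`1 ≤ m ≤ s+1`;  all other entries vanish. -/
noncomputable def Smat (p : ℕ → ℝ) (N M : ℕ) : ℝ :=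
  (if M = N then 1 - p 1 else 0) +
  if zeck N 0 = 0 then
    (if M = N + 1 then Pprod p (carryLen N + 1) else 0) +
    ∑ m ∈ Finset.Icc 1 (carryLen N),
      (if M = N + 1 - fibF (2*m) then Pprod p m * (1 - p (m+1)) else 0)
  else
    (if M = N + 1 then Pprod p (carryLen N + 2) else 0) +
    ∑ m ∈ Finset.Icc 1 (carryLen N + 1),
      (if M = N + 1 - fibF (2*m - 1) then Pprod p m * (1 - p (m+1)) else 0)

def fibLead (N : ℕ) : ℕ := Nat.findGreatest (fun j => fibF j ≤ N) N

lemma fibF_add_two (n : ℕ) : fibF (n + 2) = fibF (n + 1) + fibF n := rfl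

lemma fibF_lt_fibF_succ : ∀ n, fibF n < fibF (n + 1)
  | 0 => by simp [fibF]
  | n + 1 => by rw [fibF_add_two]; have := fibF_pos n; omega

lemma fibF_strictMono : StrictMono fibF := strictMono_nat_of_lt_succ fibF_lt_fibF_succ

lemma lt_fibF : ∀ n, n < fibF n
  | 0 => by simp [fibF]
  | n + 1 => (Nat.succ_le_of_lt (lt_fibF n)).trans_lt (fibF_lt_fibF_succ n)

lemma fibF_fibLead_le {N : ℕ} (hN : N ≠ 0) : fibF (fibLead N) ≤ N :=
  Nat.findGreatest_spec (P := fun j => fibF j ≤ N) (Nat.zero_le N) (Nat.one_le_iff_ne_zero.mpr hN)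

lemma lt_fibF_fibLead_succ (N : ℕ) : N < fibF (fibLead N + 1) := by
  by_contra! h
  exact Nat.not_succ_le_self _
    (Nat.le_findGreatest (P := fun j => fibF j ≤ N) ((lt_fibF _).le.trans h) h)

lemma fibLead_eq {k N : ℕ} (h₁ : fibF k ≤ N) (h₂ : N < fibF (k + 1)) : fibLead N = k := by
  refine le_antisymm ?_ (Nat.le_findGreatest ((lt_fibF k).le.trans h₁) h₁)
  by_contra! h
  have hN : N ≠ 0 := ((fibF_pos k).trans_le h₁).ne'
  exact (h₂.trans_le (fibF_strictMono.monotone h)).not_ge (fibF_fibLead_le hN)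

lemma fibLead_fibF (k : ℕ) : fibLead (fibF k) = k := fibLead_eq le_rfl (fibF_lt_fibF_succ k)

lemma zeck_zero_left (i : ℕ) : zeck 0 i = 0 := by rw [zeck]; simp

lemma zeck_fibLead {N : ℕ} (hN : N ≠ 0) : zeck N (fibLead N) = 1 := by
  rw [zeck]
  exact (dif_neg hN).trans (if_pos rfl)

lemma zeck_of_ne_fibLead {N i : ℕ} (hN : N ≠ 0) (hi : i ≠ fibLead N) :
    zeck N i = zeck (N - fibF (fibLead N)) i := by
  conv_lhs => rw [zeck]
  exact (dif_neg hN).trans (if_neg hi)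

lemma zeck_le_one (N i : ℕ) : zeck N i ≤ 1 := by
  induction N using Nat.strong_induction_on with
  | _ N ih =>
    rcases eq_or_ne N 0 with rfl | hN
    · simp [zeck_zero_left]
    by_cases hi : i = fibLead N
    · rw [hi, zeck_fibLead hN]
    · rw [zeck_of_ne_fibLead hN hi]
      exact ih _ (Nat.sub_lt (Nat.pos_of_ne_zero hN) (fibF_pos _))

lemma zeck_eq_zero_of_lt_fibF {N i : ℕ} (h : N < fibF i) : zeck N i = 0 := by
  induction N using Nat.strong_induction_on with
  | _ N ih =>
    rcases eq_or_ne N 0 with rfl | hN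
    · exact zeck_zero_left i
    have hi : i ≠ fibLead N := by
      rintro rfl
      exact (fibF_fibLead_le hN).not_gt h
    rw [zeck_of_ne_fibLead hN hi]
    exact ih _ (Nat.sub_lt (Nat.pos_of_ne_zero hN) (fibF_pos _)) ((Nat.sub_le _ _).trans_lt h)

lemma zeck_eq_zero_of_fibLead_lt {N i : ℕ} (h : fibLead N < i) : zeck N i = 0 :=
  zeck_eq_zero_of_lt_fibF ((lt_fibF_fibLead_succ N).trans_le (fibF_strictMono.monotone h))

lemma lt_fibF_of_zeck_eq_zero {N d : ℕ} (h : ∀ i, d < i → zeck N i = 0) :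
    N < fibF (d + 1) := by
  by_contra! hc
  have hN : N ≠ 0 := ((fibF_pos _).trans_le hc).ne'
  have hd : d < fibLead N := by
    by_contra! hd
    exact (lt_fibF_fibLead_succ N).not_ge
      (le_trans (fibF_strictMono.monotone (by omega)) hc)
  have := zeck_fibLead hN
  rw [h _ hd] at this
  exact absurd this zero_ne_one

lemma zeck_fibF (k i : ℕ) : zeck (fibF k) i = if i = k then 1 else 0 := by
  have hk : fibF k ≠ 0 := (fibF_pos k).ne'
  split_ifs with hi
  · simpa [hi, fibLead_fibF] using zeck_fibLead hk
  · rw [zeck_of_ne_fibLead hk (by rwa [fibLead_fibF]), fibLead_fibF, Nat.sub_self,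
      zeck_zero_left]

lemma zeck_fibF_add {k M : ℕ} (hM : M < fibF k) (i : ℕ) :
    zeck (fibF (k + 1) + M) i = if i = k + 1 then 1 else zeck M i := by
  have hne : fibF (k + 1) + M ≠ 0 := by have := fibF_pos (k + 1); omega
  have hlead : fibLead (fibF (k + 1) + M) = k + 1 :=
    fibLead_eq (Nat.le_add_right _ _) (by rw [fibF_add_two]; omega)
  split_ifs with hi
  · simpa [hi, hlead] using zeck_fibLead hne
  · rw [zeck_of_ne_fibLead hne (by rwa [hlead]), hlead, Nat.add_sub_cancel_left]

lemma zeck_add {c A M : ℕ} (hA : ∀ i ≤ c, zeck A i = 0) (hM : M < fibF c) (i : ℕ) :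
    zeck (A + M) i = if i < c then zeck M i else zeck A i := by
  induction A using Nat.strong_induction_on generalizing i with
  | _ A ih =>
    rcases Nat.eq_zero_or_pos c with rfl | hc
    · obtain rfl : M = 0 := by simpa [fibF] using hM
      simp
    rcases eq_or_ne A 0 with rfl | hA0
    · split_ifs with hi
      · rw [zero_add]
      · rw [zero_add, zeck_zero_left,
          zeck_eq_zero_of_lt_fibF (hM.trans_le (fibF_strictMono.monotone (not_lt.mp hi)))]
    have hcK : c < fibLead A := by
      by_contra! h
      have := zeck_fibLead hA0
      rw [hA _ h] at this
      exact absurd this zero_ne_one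
    obtain ⟨u, hu⟩ : ∃ u, fibLead A = u + 1 := ⟨fibLead A - 1, by omega⟩
    have hle := fibF_fibLead_le hA0
    have hlt := lt_fibF_fibLead_succ A
    rw [hu, fibF_add_two] at hlt
    rw [hu] at hle
    set A' := A - fibF (u + 1)
    have hA'lt : A' < fibF u := by omega
    have hAeq : A = fibF (u + 1) + A' := by omega
    have hA' : ∀ i ≤ c, zeck A' i = 0 := fun i hi => by
      rw [← hA i hi, hAeq, zeck_fibF_add hA'lt, if_neg (by omega)]
    have ih' := ih A' (by have := fibF_pos (u + 1); omega) hA'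
    have hA'M : A' + M < fibF u := by
      obtain ⟨d, rfl⟩ : ∃ d, u = d + 1 := ⟨u - 1, by omega⟩
      refine lt_fibF_of_zeck_eq_zero fun j hj => ?_
      rw [ih', if_neg (by omega)]
      exact zeck_eq_zero_of_lt_fibF (hA'lt.trans_le (fibF_strictMono.monotone hj))
    rw [hAeq, add_assoc, zeck_fibF_add hA'M, zeck_fibF_add hA'lt, ih']
    split_ifs <;> first | rfl | omega

lemma zeck_fibF_sub_one : ∀ t i, zeck (fibF t - 1) i =
    if i < t ∧ i % 2 = (t + 1) % 2 then 1 else 0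
  | 0, i => by rw [if_neg (by omega)]; exact zeck_zero_left i
  | 1, i => by
      rw [show fibF 1 - 1 = fibF 0 from rfl, zeck_fibF]
      split_ifs <;> omega
  | u + 2, i => by
      have hu := fibF_pos u
      rw [show fibF (u + 2) - 1 = fibF (u + 1) + (fibF u - 1) by rw [fibF_add_two]; omega,
        zeck_fibF_add (by omega), zeck_fibF_sub_one u i]
      split_ifs <;> omega

lemma fibLead_add {c A R : ℕ} (hA : A ≠ 0) (hdig : ∀ i ≤ c, zeck A i = 0)
    (hR : R < fibF c) : fibLead (A + R) = fibLead A := by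
  have hc : c < fibLead A := by
    by_contra! h
    have := zeck_fibLead hA
    rw [hdig _ h] at this
    exact absurd this zero_ne_one
  refine fibLead_eq ((fibF_fibLead_le hA).trans (Nat.le_add_right A R))
    (lt_fibF_of_zeck_eq_zero fun i hi => ?_)
  rw [zeck_add hdig hR, if_neg (by omega)]
  exact zeck_eq_zero_of_fibLead_lt hi

lemma fibLead_fibF_sub {j t : ℕ} (h : j + 2 ≤ t) : fibLead (fibF t - fibF j) = t - 1 := by
  obtain ⟨r, rfl⟩ : ∃ r, t = r + 2 := ⟨t - 2, by omega⟩
  have h₁ := fibF_add_two r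
  have h₂ : fibF j ≤ fibF r := fibF_strictMono.monotone (by omega)
  have h₃ := fibF_pos j
  rw [show r + 2 - 1 = r + 1 by omega]
  exact fibLead_eq (by omega) (show _ < fibF (r + 2) by omega)

lemma fibLead_fibF_sub_one {t : ℕ} (ht : 1 ≤ t) : fibLead (fibF t - 1) = t - 1 := by
  rcases eq_or_lt_of_le ht with rfl | ht
  · exact fibLead_fibF 0
  · exact fibLead_fibF_sub (j := 0) ht

/-- `N + 1 = A + F t` where `A` carries the Zeckendorf digits of `N` above its final block
`00(10)^s` (`t = 2s`) or `00(10)^s1` (`t = 2s + 1`). -/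
def IsCarryDecomp (N t A : ℕ) : Prop := N + 1 = A + fibF t ∧ ∀ i < t + 2, zeck A i = 0

lemma exists_isCarryDecomp (N : ℕ) : ∃ t A, IsCarryDecomp N t A := by
  induction N using Nat.strong_induction_on with
  | _ N ih =>
    rcases eq_or_ne N 0 with rfl | hN
    · exact ⟨0, 0, rfl, fun i _ => zeck_zero_left i⟩
    have hle := fibF_fibLead_le hN
    have hlt := lt_fibF_fibLead_succ N
    obtain hK | ⟨k, hK⟩ : fibLead N = 0 ∨ ∃ k, fibLead N = k + 1 :=
      (Nat.eq_zero_or_pos _).imp_right fun h => ⟨fibLead N - 1, by omega⟩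
    · obtain rfl : N = 1 := by rw [hK] at hle hlt; simp [fibF] at hle hlt; omega
      exact ⟨1, 0, rfl, fun i _ => zeck_zero_left i⟩
    rw [hK] at hle hlt
    rw [fibF_add_two] at hlt
    obtain ⟨t, A', hsum, hdig⟩ := ih (N - fibF (k + 1)) (by have := fibF_pos (k + 1); omega)
    have htk : t ≤ k := fibF_strictMono.le_iff_le.mp (by omega)
    rcases eq_or_lt_of_le htk with rfl | htk
    · exact ⟨t + 2, 0, by rw [fibF_add_two]; omega, fun i _ => zeck_zero_left i⟩
    · have hA' : A' < fibF k := by have := fibF_pos t; omega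
      refine ⟨t, fibF (k + 1) + A', by omega, fun i hi => ?_⟩
      rw [zeck_fibF_add hA', if_neg (by omega), hdig i hi]

namespace IsCarryDecomp

variable {N t A : ℕ}

lemma zeck_eq (h : IsCarryDecomp N t A) (i : ℕ) :
    zeck N i = if i < t + 1 then zeck (fibF t - 1) i else zeck A i := by
  have := fibF_pos t
  rw [show N = A + (fibF t - 1) by have := h.1; omega]
  exact zeck_add (fun i hi => h.2 i (by omega)) (by have := fibF_lt_fibF_succ t; omega) i

lemma zeck_of_le (h : IsCarryDecomp N t A) {i : ℕ} (hi : i ≤ t + 1) :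
    zeck N i = if i < t ∧ i % 2 ≠ t % 2 then 1 else 0 := by
  rw [h.zeck_eq]
  split_ifs with h₁ h₂ h₂
  all_goals first
    | rw [zeck_fibF_sub_one, if_pos (by omega)]
    | rw [zeck_fibF_sub_one, if_neg (by omega)]
    | omega
    | exact h.2 i (by omega)

lemma zeck_zero (h : IsCarryDecomp N t A) : zeck N 0 = t % 2 := by
  rw [h.zeck_of_le (Nat.zero_le _)]
  split_ifs <;> omega

lemma carryLen_eq (h : IsCarryDecomp N t A) : carryLen N = t / 2 := by
  have key : ∀ i ≤ t / 2, (zeck N (2 * i + 1 + t % 2) = 1 ∧ zeck N (2 * i + t % 2) = 0 ↔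
      i < t / 2) := fun i hi => by
    rw [h.zeck_of_le (by omega), h.zeck_of_le (by omega)]
    split_ifs <;> simp <;> omega
  unfold carryLen
  rw [h.zeck_zero]
  rcases Nat.mod_two_eq_zero_or_one t with ht | ht
  · rw [if_pos ht, Nat.find_eq_iff]
    simp only [ht, add_zero] at key
    exact ⟨fun hc => (key _ le_rfl).1 hc |>.false, fun n hn => not_not.2 ((key n hn.le).2 hn)⟩
  · rw [if_neg (by omega), Nat.find_eq_iff]
    simp only [ht, add_assoc] at key
    exact ⟨fun hc => (key _ le_rfl).1 hc |>.false, fun n hn => not_not.2 ((key n hn.le).2 hn)⟩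

end IsCarryDecomp

def jumpCount (N : ℕ) : ℕ := carryLen N + zeck N 0

lemma IsCarryDecomp.jumpCount_eq {N t A : ℕ} (h : IsCarryDecomp N t A) :
    jumpCount N = (t + 1) / 2 := by
  rw [jumpCount, h.carryLen_eq, h.zeck_zero]
  omega

/-- Row `N` of `S` without its diagonal entry, applied to `v`. The two cases in the definition of
`Smat` are merged: the backward moves are to `N + 1 - F (2m - ε₀)`, `1 ≤ m ≤ s + ε₀`. -/
noncomputable def offDiagApply (p v : ℕ → ℝ) (N : ℕ) : ℝ :=
  Pprod p (jumpCount N + 1) * v (N + 1) +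
    ∑ m ∈ Finset.Icc 1 (jumpCount N),
      Pprod p m * (1 - p (m + 1)) * v (N + 1 - fibF (2 * m - zeck N 0))

lemma Smat_eq (p : ℕ → ℝ) (N M : ℕ) :
    Smat p N M = (if M = N then 1 - p 1 else 0) +
      ((if M = N + 1 then Pprod p (jumpCount N + 1) else 0) +
        ∑ m ∈ Finset.Icc 1 (jumpCount N),
          if M = N + 1 - fibF (2 * m - zeck N 0) then Pprod p m * (1 - p (m + 1)) else 0) := by
  obtain h | h : zeck N 0 = 0 ∨ zeck N 0 = 1 := by have := zeck_le_one N 0; omega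
  · simp [Smat, jumpCount, h]
  · simp [Smat, jumpCount, h, add_assoc]

lemma Smat_eq_zero {p : ℕ → ℝ} {N M : ℕ} (h : N + 1 < M) : Smat p N M = 0 := by
  rw [Smat_eq, if_neg (by omega), if_neg (by omega),
    Finset.sum_eq_zero fun m _ => if_neg (by omega)]
  simp

lemma tsum_Smat_mul (p v : ℕ → ℝ) (hv : v 0 = 0) (N : ℕ) :
    ∑' j, Smat p N (j + 1) * v (j + 1) = (1 - p 1) * v N + offDiagApply p v N := by
  rw [tsum_eq_sum (s := Finset.range (N + 1)) fun j hj => by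
      rw [Smat_eq_zero (by simp at hj; omega), zero_mul],
    ← add_zero (Finset.sum _ _), ← mul_zero (Smat p N 0), ← hv,
    ← Finset.sum_range_succ' fun M => Smat p N M * v M]
  simp only [Smat_eq, add_mul, Finset.sum_mul, Finset.sum_add_distrib, ite_mul, zero_mul]
  rw [Finset.sum_comm]
  simp [offDiagApply, Finset.sum_ite_eq', mul_comm]

section Products

variable {p : ℕ → ℝ}

lemma Pprod_succ (t : ℕ) : Pprod p (t + 1) = Pprod p t * p (t + 1) :=
  Finset.prod_Icc_succ_top (by omega) _

lemma Pprod_pos (hp : ∀ i, 1 ≤ i → 0 < p i) (t : ℕ) : 0 < Pprod p t :=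
  Finset.prod_pos fun i hi => hp i (Finset.mem_Icc.mp hi).1

lemma Pprod_le_one (hp : ∀ i, 1 ≤ i → 0 < p i ∧ p i ≤ 1) (t : ℕ) : Pprod p t ≤ 1 :=
  Finset.prod_le_one (fun i hi => (hp i (Finset.mem_Icc.mp hi).1).1.le)
    fun i hi => (hp i (Finset.mem_Icc.mp hi).1).2

lemma sum_Pprod_mul_one_sub (s : ℕ) :
    ∑ m ∈ Finset.Icc 1 s, Pprod p m * (1 - p (m + 1)) = p 1 - Pprod p (s + 1) := by
  induction s with
  | zero => simp [Pprod]
  | succ s ih =>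
    rw [Finset.sum_Icc_succ_top (by omega), ih, Pprod_succ (s + 1)]
    ring

/-- `leadProd p (2 * s) = (p 2 ⋯ p (s + 1)) ^ 2` and
`leadProd p (2 * s + 1) = leadProd p (2 * s) * p (s + 2)`. -/
noncomputable def leadProd (p : ℕ → ℝ) (k : ℕ) : ℝ :=
  ∏ j ∈ Finset.Icc 1 k, p ((j + 1) / 2 + 1)

lemma leadProd_succ (k : ℕ) : leadProd p (k + 1) = leadProd p k * p ((k + 2) / 2 + 1) :=
  Finset.prod_Icc_succ_top (by omega) _

lemma leadProd_pos (hp : ∀ i, 1 ≤ i → 0 < p i) (k : ℕ) : 0 < leadProd p k :=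
  Finset.prod_pos fun _ _ => hp _ (by omega)

lemma leadProd_antitone (hp : ∀ i, 1 ≤ i → 0 < p i ∧ p i ≤ 1) : Antitone (leadProd p) :=
  antitone_nat_of_succ_le fun k => by
    rw [leadProd_succ]
    exact mul_le_of_le_one_right (leadProd_pos (fun i hi => (hp i hi).1) k).le (hp _ (by omega)).2

lemma leadProd_two_mul_mul_sq (k : ℕ) : leadProd p (2 * k) * p 1 ^ 2 = Pprod p (k + 1) ^ 2 := by
  induction k with
  | zero => simp [leadProd, Pprod]
  | succ k ih =>
    rw [show 2 * (k + 1) = 2 * k + 1 + 1 by ring, leadProd_succ, leadProd_succ,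
      Pprod_succ (k + 1), show (2 * k + 1 + 2) / 2 + 1 = k + 1 + 1 by omega,
      show (2 * k + 2) / 2 + 1 = k + 1 + 1 by omega]
    linear_combination p (k + 1 + 1) ^ 2 * ih

end Products

noncomputable def harmonicVec (p : ℕ → ℝ) (N : ℕ) : ℝ :=
  if N = 0 then 0 else (leadProd p (fibLead N))⁻¹

lemma harmonicVec_fibF (p : ℕ → ℝ) (k : ℕ) :
    harmonicVec p (fibF k) = (leadProd p k)⁻¹ := by
  rw [harmonicVec, if_neg (fibF_pos k).ne', fibLead_fibF]

lemma harmonicVec_zero (p : ℕ → ℝ) : harmonicVec p 0 = 0 := if_pos rfl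

lemma harmonicVec_one (p : ℕ → ℝ) : harmonicVec p 1 = 1 := by
  show harmonicVec p (fibF 0) = 1
  simp [harmonicVec_fibF, leadProd]

lemma IsCarryDecomp.offDiagApply_eq {N t A : ℕ} (h : IsCarryDecomp N t A) (p v : ℕ → ℝ) :
    offDiagApply p v N = Pprod p ((t + 1) / 2 + 1) * v (A + fibF t) +
      ∑ m ∈ Finset.Icc 1 ((t + 1) / 2),
        Pprod p m * (1 - p (m + 1)) * v (A + (fibF t - fibF (2 * m - t % 2))) := by
  rw [offDiagApply, h.jumpCount_eq, h.zeck_zero, h.1]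
  congr 1
  refine Finset.sum_congr rfl fun m hm => ?_
  have : fibF (2 * m - t % 2) ≤ fibF t :=
    fibF_strictMono.monotone (by rw [Finset.mem_Icc] at hm; omega)
  rw [Nat.add_sub_assoc this]

lemma offDiagApply_harmonicVec_of_ne_zero {p : ℕ → ℝ} {N t A : ℕ} (h : IsCarryDecomp N t A)
    (hA : A ≠ 0) : offDiagApply p (harmonicVec p) N = p 1 * harmonicVec p N := by
  have hw : ∀ R ≤ fibF t, harmonicVec p (A + R) = (leadProd p (fibLead A))⁻¹ := by
    intro R hR
    rw [harmonicVec, if_neg (by omega),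
      fibLead_add hA (c := t + 1) (fun i hi => h.2 i (by omega))
        (hR.trans_lt (fibF_lt_fibF_succ t))]
  have hN : N = A + (fibF t - 1) := by have := h.1; have := fibF_pos t; omega
  rw [h.offDiagApply_eq, hN, hw _ le_rfl, hw _ (Nat.sub_le _ _),
    Finset.sum_congr rfl fun m _ => by rw [hw _ (Nat.sub_le _ _)], ← Finset.sum_mul,
    sum_Pprod_mul_one_sub]
  ring

lemma offDiagApply_harmonicVec_fibF_sub_one {p : ℕ → ℝ} (hp : ∀ i, 1 ≤ i → 0 < p i)
    {t : ℕ} (ht : 1 ≤ t) :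
    offDiagApply p (harmonicVec p) (fibF t - 1) = p 1 * harmonicVec p (fibF t - 1) := by
  obtain ⟨c, hc⟩ : ∃ c, (t + 1) / 2 = c + 1 := ⟨(t + 1) / 2 - 1, by omega⟩
  have hft := lt_fibF t
  have h : IsCarryDecomp (fibF t - 1) t 0 := ⟨by omega, fun i _ => zeck_zero_left i⟩
  have hlast : fibF t - fibF (2 * (c + 1) - t % 2) = 0 := by
    rw [show 2 * (c + 1) - t % 2 = t by omega, Nat.sub_self]
  have hw : ∀ m ∈ Finset.Icc 1 c,
      harmonicVec p (fibF t - fibF (2 * m - t % 2)) = (leadProd p (t - 1))⁻¹ := fun m hm => by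
    rw [Finset.mem_Icc] at hm
    have := fibF_strictMono (show 2 * m - t % 2 < t by omega)
    rw [harmonicVec, if_neg (by omega), fibLead_fibF_sub (by omega)]
  have hlead : leadProd p t = leadProd p (t - 1) * p (c + 2) := by
    conv_lhs => rw [show t = t - 1 + 1 by omega]
    rw [leadProd_succ, show (t - 1 + 2) / 2 + 1 = c + 2 by omega]
  have h₁ := leadProd_pos hp (t - 1)
  have h₂ := hp (c + 2) (by omega)
  rw [h.offDiagApply_eq]
  simp only [zero_add]
  rw [hc, Finset.sum_Icc_succ_top (by omega), hlast, harmonicVec_zero, mul_zero, add_zero,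
    Finset.sum_congr rfl fun m hm => by rw [hw m hm], ← Finset.sum_mul, sum_Pprod_mul_one_sub,
    harmonicVec_fibF, harmonicVec, if_neg (by omega), fibLead_fibF_sub_one ht, hlead,
    Pprod_succ (c + 1)]
  field_simp
  ring

lemma offDiagApply_harmonicVec {p : ℕ → ℝ} (hp : ∀ i, 1 ≤ i → 0 < p i) {N : ℕ}
    (hN : N ≠ 0) : offDiagApply p (harmonicVec p) N = p 1 * harmonicVec p N := by
  obtain ⟨t, A, h⟩ := exists_isCarryDecomp N
  rcases eq_or_ne A 0 with rfl | hA
  · have hN' : N = fibF t - 1 := by have := h.1; omega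
    subst hN'
    exact offDiagApply_harmonicVec_fibF_sub_one hp (Nat.one_le_iff_ne_zero.2 (by
      rintro rfl; exact hN rfl))
  · exact offDiagApply_harmonicVec_of_ne_zero h hA

lemma offDiagApply_sub_mul (p u v : ℕ → ℝ) (a : ℝ) (N : ℕ) :
    offDiagApply p (fun X => u X - a * v X) N = offDiagApply p u N - a * offDiagApply p v N := by
  simp only [offDiagApply, mul_add, Finset.mul_sum, mul_sub, Finset.sum_sub_distrib]
  ring_nf

lemma offDiagApply_of_eq_zero {p v : ℕ → ℝ} {N : ℕ} (hv : ∀ M ≤ N, v M = 0) :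
    offDiagApply p v N = Pprod p (jumpCount N + 1) * v (N + 1) := by
  rw [offDiagApply, Finset.sum_eq_zero fun m _ => by
    rw [hv _ (by have := fibF_pos (2 * m - zeck N 0); omega), mul_zero], add_zero]

lemma eq_mul_harmonicVec {p v : ℕ → ℝ} (hp : ∀ i, 1 ≤ i → 0 < p i) (hv₀ : v 0 = 0)
    (hv : ∀ N, N ≠ 0 → offDiagApply p v N = p 1 * v N) (N : ℕ) :
    v N = v 1 * harmonicVec p N := by
  set d := fun X => v X - v 1 * harmonicVec p X with hd
  suffices ∀ N, d N = 0 from sub_eq_zero.mp (this N)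
  intro N
  induction N using Nat.strong_induction_on with
  | _ N ih =>
    obtain rfl | rfl | ⟨M, hM, rfl⟩ : N = 0 ∨ N = 1 ∨ ∃ M, M ≠ 0 ∧ N = M + 1 := by
      rcases N with _ | _ | M <;> simp
    · simp [d, hv₀, harmonicVec_zero]
    · simp [d, harmonicVec_one]
    · have h₁ : offDiagApply p d M = 0 := by
        rw [hd, offDiagApply_sub_mul, hv M hM, offDiagApply_harmonicVec hp hM, ← mul_assoc,
          mul_comm (v 1), mul_assoc, ← mul_sub]
        exact mul_eq_zero_of_right _ (ih M (by omega))
      rw [offDiagApply_of_eq_zero fun K hK => ih K (by omega)] at h₁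
      exact (mul_eq_zero.mp h₁).resolve_left (Pprod_pos hp _).ne'

lemma le_leadProd_of_fixed {p v : ℕ → ℝ} (hp : ∀ i, 1 ≤ i → 0 < p i)
    (hv : ∀ i, 1 ≤ i → v i ≤ 1)
    (hfix : ∀ i, 1 ≤ i → v i = ∑' j, Smat p i (j + 1) * v (j + 1))
    (k : ℕ) : v 1 ≤ leadProd p k := by
  have hv' : ∀ N, N ≠ 0 → Function.update v 0 0 N = v N := fun N hN =>
    Function.update_of_ne hN _ _
  have hharm : ∀ N, N ≠ 0 →
      offDiagApply p (Function.update v 0 0) N = p 1 * Function.update v 0 0 N := fun N hN => by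
    have := hfix N (by omega)
    simp only [← hv' _ (Nat.succ_ne_zero _), ← hv' N hN] at this
    rw [tsum_Smat_mul p _ (Function.update_self _ _ _)] at this
    linarith
  have h := eq_mul_harmonicVec hp (Function.update_self _ _ _) hharm (fibF k)
  rw [hv' _ (fibF_pos k).ne', hv' _ one_ne_zero, harmonicVec_fibF] at h
  have := hv _ (fibF_pos k)
  rwa [h, mul_inv_le_iff₀ (leadProd_pos hp k), one_mul] at this

lemma harmonicVec_eq_tsum {p : ℕ → ℝ} (hp : ∀ i, 1 ≤ i → 0 < p i) {i : ℕ}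
    (hi : 1 ≤ i) :
    harmonicVec p i = ∑' j, Smat p i (j + 1) * harmonicVec p (j + 1) := by
  rw [tsum_Smat_mul p _ (harmonicVec_zero p), offDiagApply_harmonicVec hp (by omega)]
  ring

lemma iInf_prod_pos_iff {p : ℕ → ℝ} (hp : ∀ i, 1 ≤ i → 0 < p i ∧ p i ≤ 1) :
    (0 < ⨅ n : ℕ, ∏ k ∈ Finset.Icc 1 n, p k) ↔
      ∃ c, 0 < c ∧ ∀ k, c ≤ leadProd p k := by
  have hpos : ∀ i, 1 ≤ i → 0 < p i := fun i hi => (hp i hi).1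
  have hp₁ := hpos 1 le_rfl
  constructor
  · intro hP
    refine ⟨(⨅ n : ℕ, Pprod p n) ^ 2 / p 1 ^ 2, by positivity, fun k => ?_⟩
    have hle : (⨅ n : ℕ, Pprod p n) ≤ Pprod p (k + 1) :=
      ciInf_le ⟨0, by rintro _ ⟨n, rfl⟩; exact (Pprod_pos hpos n).le⟩ _
    calc (⨅ n : ℕ, Pprod p n) ^ 2 / p 1 ^ 2 ≤ Pprod p (k + 1) ^ 2 / p 1 ^ 2 := by gcongr
      _ = leadProd p (2 * k) := by rw [← leadProd_two_mul_mul_sq]; field_simp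
      _ ≤ leadProd p k := leadProd_antitone hp (by omega)
  · rintro ⟨c, hc, hle⟩
    refine (lt_min one_pos (by positivity : 0 < c * p 1 ^ 2)).trans_le (le_ciInf fun n => ?_)
    rcases n with _ | k
    · simp
    calc min 1 (c * p 1 ^ 2) ≤ leadProd p (2 * k) * p 1 ^ 2 :=
          min_le_of_right_le (by gcongr; exact hle _)
      _ = Pprod p (k + 1) ^ 2 := leadProd_two_mul_mul_sq k
      _ ≤ Pprod p (k + 1) :=
          pow_le_of_le_one (Pprod_pos hpos _).le (Pprod_le_one hp _) two_ne_zero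

/-- There exists a sequence `v = (v_i)_{i ≥ 1}` with `0 < v i ≤ 1` and
`v i = ∑_{j ≥ 1} S̃ i j * v j` for all `i ≥ 1` (where `S̃` is `S` with first row and
column removed) if and only if `∏_{i=1}^∞ p i > 0` (the infinite product of the
decreasing partial products, i.e. their infimum, is positive).  Equivalently, the Markov
chain is transient iff `∏ p i > 0`. -/
theorem stmt3 (p : ℕ → ℝ) (hp : ∀ i, 1 ≤ i → 0 < p i ∧ p i ≤ 1) :
    (∃ v : ℕ → ℝ, (∀ i, 1 ≤ i → 0 < v i ∧ v i ≤ 1) ∧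
      ∀ i, 1 ≤ i → v i = ∑' j : ℕ, Smat p i (j+1) * v (j+1)) ↔
    0 < ⨅ n : ℕ, ∏ k ∈ Finset.Icc 1 n, p k := by
  have hpos : ∀ i, 1 ≤ i → 0 < p i := fun i hi => (hp i hi).1
  rw [iInf_prod_pos_iff hp]
  constructor
  · rintro ⟨v, hv, hfix⟩
    exact ⟨v 1, (hv 1 le_rfl).1, le_leadProd_of_fixed hpos (fun i hi => (hv i hi).2) hfix⟩
  · rintro ⟨c, hc, hle⟩
    refine ⟨fun N => c * harmonicVec p N, fun i hi => ?_, fun i hi => ?_⟩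
    · have := leadProd_pos hpos (fibLead i)
      dsimp only
      rw [harmonicVec, if_neg (by omega)]
      exact ⟨by positivity, mul_inv_le_one_of_le₀ (hle _) this.le⟩
    · simp only [mul_left_comm (Smat p i _), tsum_mul_left, ← harmonicVec_eq_tsum hpos hi]
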